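/- The sum over all h ∈ Z^n of the number of h-increasing trees on {0,...,n} equals (n+1)^n, the number of rooted Cayley trees on {0,...,n}. -/

import Mathlib

open scoped Classical
open MeasureTheory

noncomputable section

def extv {α : Type*} [Zero α] {n : ℕ} (x : Fin n → α) : Fin (n + 1) → α :=
  Fin.cases 0 x

/-- The centroid `h̄` of `h ∈ ℤ^n`: `h̄_i = h_i + i/(n+1)`, with the convention `h_0 = 0`. -/
def cent (n : ℕ) (h : Fin n → ℤ) : Fin (n + 1) → ℝ :=
  fun i => (extv h i : ℤ) + (i : ℝ) / (n + 1)

/-- The graph `G_h` on `{0, …, n}` whose edges are the pairs `(i,j)` with `|h̄_i - h̄_j| < 1`. -/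
def Gh (n : ℕ) (h : Fin n → ℤ) : SimpleGraph (Fin (n + 1)) where
  Adj i j := i ≠ j ∧ |cent n h i - cent n h j| < 1
  symm := ⟨fun i j hij => ⟨hij.1.symm, by rw [abs_sub_comm]; exact hij.2⟩⟩
  loopless := ⟨fun i hi => hi.1 rfl⟩

/-- The key of the pair `(i, j)`: the pair `(min(h̄_i, h̄_j), max(h̄_i, h̄_j))` with the
lexicographic order, along which edges of `G_h` are ordered. -/
def keyC (n : ℕ) (h : Fin n → ℤ) (p : Fin (n + 1) × Fin (n + 1)) : ℝ ×ₗ ℝ :=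
  toLex (min (cent n h p.1) (cent n h p.2), max (cent n h p.1) (cent n h p.2))

/-- The subgraph of `G` consisting of the edges strictly greater than `e`. -/
def aboveC (n : ℕ) (h : Fin n → ℤ) (G : SimpleGraph (Fin (n + 1)))
    (e : Fin (n + 1) × Fin (n + 1)) : SimpleGraph (Fin (n + 1)) where
  Adj a b := G.Adj a b ∧ keyC n h e < keyC n h (a, b)
  symm := by
    constructor
    intro a b hab
    refine ⟨hab.1.symm, ?_⟩
    have hk : keyC n h (a, b) = keyC n h (b, a) := by
      simp only [keyC]; rw [min_comm (cent n h a), max_comm (cent n h a)]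
    rw [← hk]; exact hab.2
  loopless := ⟨fun a ha => G.loopless.irrefl a ha.1⟩

/-- An edge `e = (i, j)` of `G_h` (normalized so that `h̄_i < h̄_j`) is `(G, h)`-active if
`i` and `j` are joined by a path among the edges of `G` strictly greater than `e`. -/
def IsActiveC (n : ℕ) (h : Fin n → ℤ) (G : SimpleGraph (Fin (n + 1)))
    (e : Fin (n + 1) × Fin (n + 1)) : Prop :=
  cent n h e.1 < cent n h e.2 ∧ (Gh n h).Adj e.1 e.2 ∧ (aboveC n h G e).Reachable e.1 e.2

/-- The finset of `(G, h)`-active edges. -/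
def activeC (n : ℕ) (h : Fin n → ℤ) (G : SimpleGraph (Fin (n + 1))) :
    Finset (Fin (n + 1) × Fin (n + 1)) :=
  Finset.univ.filter (IsActiveC n h G)

/-- `G ⊕ e`: toggle the edge `e` (delete it if present, add it otherwise). -/
def toggleC {n : ℕ} (G : SimpleGraph (Fin (n + 1))) (e : Fin (n + 1) × Fin (n + 1)) :
    SimpleGraph (Fin (n + 1)) :=
  if G.Adj e.1 e.2 then G.deleteEdges {s(e.1, e.2)}
  else G ⊔ SimpleGraph.fromEdgeSet {s(e.1, e.2)}

/-- The map `Ψ_h`: toggle the least `(G, h)`-active edge, if any. -/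
def PsiH (n : ℕ) (h : Fin n → ℤ) (G : SimpleGraph (Fin (n + 1))) :
    SimpleGraph (Fin (n + 1)) :=
  if hne : (activeC n h G).Nonempty then
    toggleC G (Finset.exists_min_image (activeC n h G) (keyC n h) hne).choose
  else G

/-- The index `i_0` of the least coordinate of the centroid `h̄`. -/
def idxMin (n : ℕ) (h : Fin n → ℤ) : Fin (n + 1) :=
  (Finite.exists_min (cent n h)).choose

/-- An `h`-increasing tree on `{0, …, n}`: a spanning tree of `G_h` such that `h̄` strictly
increases along every simple path starting at the vertex `i_0` minimizing `h̄`. -/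
def IsIncTree (n : ℕ) (h : Fin n → ℤ) (T : SimpleGraph (Fin (n + 1))) : Prop :=
  T.IsTree ∧ T ≤ Gh n h ∧
    ∀ (v : Fin (n + 1)) (p : T.Walk (idxMin n h) v), p.IsPath →
      List.Chain' (fun a b => cent n h a < cent n h b) p.support

end

/-!
Rooting an `h`-increasing tree at `i₀(h)` gives a rooted tree whose parent map `P` sends `v` to
its unique neighbour below it in `h̄`. Since `0 < h̄_v - h̄_{P v} < 1` and the fractional parts of
`h̄` are prescribed, the integer step is forced: `h_v - h_{P v} = [v < P v]`. Hence `h` (with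
`h_0 = 0`) is recovered from the rooted tree, and conversely summing these forced steps along the
path to the root turns every rooted tree into an `h`-increasing one with `i₀(h)` its root. So the
sum counts rooted trees on `{0, …, n}`, and these are counted by Joyal's bijection: a rooted tree
with a marked vertex `b` becomes the endofunction that equals the parent map off the path
`b, P b, …, r` and sends the `i`-th smallest vertex of this path to `P^i b`; the path is recovered
as the set of periodic points. Thus `(n + 1)` times their number is `(n + 1)^(n + 1)`.
-/

open Function Finset

section ParentMap

variable {α : Type*} {P : α → α} {r : α}

structure IsParentMap (P : α → α) (r : α) : Prop where
  apply_root : P r = r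
  exists_iterate_eq : ∀ a, ∃ k, P^[k] a = r

namespace IsParentMap

variable (hP : IsParentMap P r)

noncomputable def depth (a : α) : ℕ := Nat.find (hP.exists_iterate_eq a)

lemma iterate_depth (a : α) : P^[hP.depth a] a = r := Nat.find_spec (hP.exists_iterate_eq a)

lemma depth_le {a : α} {k : ℕ} (h : P^[k] a = r) : hP.depth a ≤ k := Nat.find_le h

lemma iterate_ne_of_lt_depth {a : α} {k : ℕ} (hk : k < hP.depth a) : P^[k] a ≠ r :=
  Nat.find_min (hP.exists_iterate_eq a) hk

lemma depth_eq_zero {a : α} : hP.depth a = 0 ↔ a = r := by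
  rw [depth, Nat.find_eq_zero, iterate_zero_apply]

lemma depth_apply {a : α} (ha : a ≠ r) : hP.depth (P a) + 1 = hP.depth a := by
  have hpos : hP.depth a ≠ 0 := mt hP.depth_eq_zero.mp ha
  refine le_antisymm ?_ ?_
  · have : P^[hP.depth a - 1] (P a) = r := by
      rw [← iterate_succ_apply, Nat.succ_eq_add_one, Nat.sub_add_cancel (by omega),
        hP.iterate_depth]
    have := hP.depth_le this
    omega
  · exact hP.depth_le (by rw [iterate_succ_apply, hP.iterate_depth])

include hP in
lemma apply_ne {a : α} (ha : a ≠ r) : P a ≠ a := fun h => by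
  have := hP.depth_apply ha
  rw [h] at this
  omega

lemma iterate_injOn {b : α} {i j : ℕ} (hi : i ≤ hP.depth b) (hj : j ≤ hP.depth b)
    (hij : P^[i] b = P^[j] b) : i = j := by
  wlog hlt : i < j generalizing i j
  · rcases (not_lt.mp hlt).eq_or_lt with h | h
    · exact h.symm
    · exact (this hj hi hij.symm h).symm
  refine absurd ?_ (hP.iterate_ne_of_lt_depth (a := b) (k := hP.depth b - j + i) (by omega))
  rw [iterate_add_apply, hij, ← iterate_add_apply, Nat.sub_add_cancel hj, hP.iterate_depth]

theorem induction {motive : α → Prop} (hP : IsParentMap P r) (root : motive r)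
    (step : ∀ a, a ≠ r → motive (P a) → motive a) (a : α) : motive a := by
  induction h : hP.depth a using Nat.strong_induction_on generalizing a with
  | _ d ih =>
    by_cases ha : a = r
    · exact ha ▸ root
    · exact step a ha (ih _ (by rw [← h, ← hP.depth_apply ha]; omega) _ rfl)

include hP in
lemma lt_of_apply_lt {β : Type*} [Preorder β] {c : α → β} (hc : ∀ a, a ≠ r → c (P a) < c a)
    {a : α} (ha : a ≠ r) : c r < c a := by
  induction a using hP.induction with
  | root => exact absurd rfl ha
  | step a ha' ih =>
    by_cases hPa : P a = r
    · exact hPa ▸ hc a ha'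
    · exact (ih hPa).trans (hc a ha')

end IsParentMap

lemma isParentMap_of_apply_lt [Finite α] {β : Type*} [Preorder β] {c : α → β} (hr : P r = r)
    (hc : ∀ a, a ≠ r → c (P a) < c a) : IsParentMap P r := by
  refine ⟨hr, fun a => ?_⟩
  have hwf := Finite.wellFounded_of_trans_of_irrefl fun x y : α => c x < c y
  induction a using hwf.induction with
  | _ a ih =>
    by_cases ha : a = r
    · exact ⟨0, ha⟩
    · obtain ⟨k, hk⟩ := ih (P a) (hc a ha)
      exact ⟨k + 1, by rwa [iterate_succ_apply]⟩

end ParentMap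

namespace SimpleGraph

variable {V : Type*} {P : V → V} {r : V}

lemma Walk.isChain_support_concat {G : SimpleGraph V} {R : V → V → Prop} {u v w : V}
    (p : G.Walk u v) (h : G.Adj v w) :
    (p.concat h).support.IsChain R ↔ p.support.IsChain R ∧ R v w := by
  rw [Walk.support_concat, List.isChain_append, List.getLast?_eq_some_getLast p.support_ne_nil,
    Walk.getLast_support]
  simp

lemma Walk.le_of_isChain_support {G : SimpleGraph V} {β : Type*} [Preorder β] {c : V → β}
    {u v x : V} {p : G.Walk u v} (hp : p.support.IsChain (fun a b => c a < c b))
    (hx : x ∈ p.support) : c u ≤ c x ∧ c x ≤ c v :=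
  ⟨hp.induction (fun x => c u ≤ c x) _ (fun _ _ h h' => h'.trans (le_of_lt h))
      (fun _ => by rw [Walk.head_support]) x hx,
    hp.backwards_induction (fun x => c x ≤ c v) _ (fun _ _ h h' => (le_of_lt h).trans h')
      (fun _ => by rw [Walk.getLast_support]) x hx⟩

def IsIncreasingFrom {β : Type*} [Preorder β] (T : SimpleGraph V) (c : V → β) (r : V) : Prop :=
  ∀ v (p : T.Walk r v), p.IsPath → p.support.IsChain (fun a b => c a < c b)

def parentGraph (r : V) (P : V → V) : SimpleGraph V := fromRel fun a b => a ≠ r ∧ b = P a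

lemma parentGraph_adj (hP : IsParentMap P r) {a b : V} :
    (parentGraph r P).Adj a b ↔ (a ≠ r ∧ b = P a) ∨ (b ≠ r ∧ a = P b) := by
  rw [parentGraph, fromRel_adj, and_iff_right_iff_imp]
  rintro (⟨ha, rfl⟩ | ⟨hb, rfl⟩)
  · exact (hP.apply_ne ha).symm
  · exact hP.apply_ne hb

lemma reachable_parentGraph (hP : IsParentMap P r) (a : V) : (parentGraph r P).Reachable r a := by
  induction a using hP.induction with
  | root => rfl
  | step a ha ih => exact ih.trans ((parentGraph_adj hP).mpr (.inr ⟨ha, rfl⟩)).reachable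

lemma edgeSet_parentGraph (hP : IsParentMap P r) :
    (parentGraph r P).edgeSet = Set.range fun a : {a // a ≠ r} => s(a.1, P a.1) := by
  ext e
  induction e using Sym2.ind with
  | _ a b =>
    rw [mem_edgeSet, parentGraph_adj hP]
    constructor
    · rintro (⟨ha, rfl⟩ | ⟨hb, rfl⟩)
      · exact ⟨⟨a, ha⟩, rfl⟩
      · exact ⟨⟨b, hb⟩, Sym2.eq_swap⟩
    · rintro ⟨⟨c, hc⟩, hcab⟩
      rcases Sym2.eq_iff.mp hcab with ⟨rfl, rfl⟩ | ⟨rfl, rfl⟩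
      · exact .inl ⟨hc, rfl⟩
      · exact .inr ⟨hc, rfl⟩

lemma isTree_parentGraph [Finite V] (hP : IsParentMap P r) : (parentGraph r P).IsTree := by
  have := Fintype.ofFinite V
  rw [isTree_iff_connected_and_card]
  refine ⟨(connected_iff_exists_forall_reachable _).mpr ⟨r, reachable_parentGraph hP⟩, ?_⟩
  have hinj : Function.Injective fun a : {a // a ≠ r} => s(a.1, P a.1) := by
    rintro ⟨a, ha⟩ ⟨b, hb⟩ hab
    dsimp only at hab
    rcases Sym2.eq_iff.mp hab with ⟨hab, -⟩ | ⟨rfl, hPP⟩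
    · exact Subtype.ext hab
    · have h1 := hP.depth_apply ha
      have h2 := hP.depth_apply hb
      rw [hPP] at h1
      omega
  rw [edgeSet_parentGraph hP, Nat.card_range_of_injective hinj, Nat.card_eq_fintype_card,
    Nat.card_eq_fintype_card, Fintype.card_subtype_compl, Fintype.card_subtype_eq]
  have := Fintype.card_pos_iff.mpr ⟨r⟩
  omega

lemma isIncreasingFrom_parentGraph (hP : IsParentMap P r) {β : Type*} [Preorder β] {c : V → β}
    (hc : ∀ a, a ≠ r → c (P a) < c a) : (parentGraph r P).IsIncreasingFrom c r := by
  intro v p hp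
  suffices ∀ {u v : V} (p : (parentGraph r P).Walk u v), u = r → p.IsPath →
      p.support.IsChain (fun a b => c a < c b) ∧ (v ≠ r → P v ∈ p.support) from
    (this p rfl hp).1
  intro u v p
  induction p using Walk.concatRec with
  | Hnil => exact fun hu _ => ⟨List.isChain_singleton _, fun hv => absurd hu hv⟩
  | Hconcat p h ih =>
    intro hu hp
    rw [Walk.concat_isPath_iff] at hp
    obtain ⟨hchain, hmem⟩ := ih hu hp.1
    rw [Walk.isChain_support_concat, Walk.support_concat]
    rcases (parentGraph_adj hP).mp h with ⟨hv, rfl⟩ | ⟨hw, rfl⟩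
    · exact absurd (hmem hv) hp.2
    · exact ⟨⟨hchain, hc _ hw⟩, fun _ => List.mem_append_left _ p.end_mem_support⟩

section Preorder

variable {β : Type*} [Preorder β] {T : SimpleGraph V} {c : V → β}

lemma IsIncreasingFrom.root_le (hinc : T.IsIncreasingFrom c r) (hT : T.Connected) (v : V) :
    c r ≤ c v :=
  have p := (hT.preconnected r v).some.toPath
  (Walk.le_of_isChain_support (hinc v p.1 p.2) p.1.end_mem_support).1

namespace IsTree

variable (hT : T.IsTree)

noncomputable def path (u v : V) : T.Walk u v := (hT.existsUnique_path u v).exists.choose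

lemma isPath_path (u v : V) : (hT.path u v).IsPath := (hT.existsUnique_path u v).exists.choose_spec

lemma eq_path {u v : V} {p : T.Walk u v} (hp : p.IsPath) : p = hT.path u v :=
  (hT.existsUnique_path u v).unique hp (hT.isPath_path u v)

noncomputable def parent (r v : V) : V := (hT.path r v).penultimate

lemma parent_self (r : V) : hT.parent r r = r := by
  have hp := hT.isPath_path r r
  rw [Walk.isPath_iff_nil, ← Walk.eq_nil_iff_nil] at hp
  rw [parent, hp, Walk.penultimate_nil]

lemma adj_parent {v : V} (hv : v ≠ r) : T.Adj (hT.parent r v) v :=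
  Walk.adj_penultimate fun h => hv h.eq.symm

lemma parent_lt (hinc : T.IsIncreasingFrom c r) {v : V} (hv : v ≠ r) :
    c (hT.parent r v) < c v := by
  have hchain := hinc v _ (hT.isPath_path r v)
  rw [← Walk.concat_dropLast (p := hT.path r v) (Walk.adj_penultimate fun h => hv h.eq.symm),
    Walk.isChain_support_concat] at hchain
  exact hchain.2

lemma eq_parent_of_adj (hinc : T.IsIncreasingFrom c r) {u v : V} (huv : T.Adj u v)
    (hlt : c u < c v) : u = hT.parent r v := by
  let q := hT.path r u
  have hv : v ∉ q.support := fun hv =>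
    (Walk.le_of_isChain_support (hinc u q (hT.isPath_path r u)) hv).2.not_gt hlt
  have hq : (q.concat huv).IsPath := (hT.isPath_path r u).concat hv huv
  rw [parent, ← hT.eq_path hq, Walk.penultimate_concat]

lemma isParentMap_parent [Finite V] (hinc : T.IsIncreasingFrom c r) :
    IsParentMap (hT.parent r) r :=
  isParentMap_of_apply_lt (hT.parent_self r) fun _ hv => hT.parent_lt hinc hv

end IsTree

end Preorder

lemma IsTree.eq_parentGraph [Finite V] {β : Type*} [LinearOrder β] {T : SimpleGraph V}
    {c : V → β} (hT : T.IsTree)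
    (hinc : T.IsIncreasingFrom c r) (hc : Function.Injective c) :
    T = parentGraph r (hT.parent r) := by
  ext a b
  rw [parentGraph_adj (hT.isParentMap_parent hinc)]
  constructor
  · intro hab
    rcases lt_trichotomy (c a) (c b) with hlt | heq | hgt
    · refine .inr ⟨fun hb => ?_, hT.eq_parent_of_adj hinc hab hlt⟩
      exact (hinc.root_le hT.connected a).not_gt (hb ▸ hlt)
    · exact absurd (hc heq) hab.ne
    · refine .inl ⟨fun ha => ?_, hT.eq_parent_of_adj hinc hab.symm hgt⟩
      exact (hinc.root_le hT.connected b).not_gt (ha ▸ hgt)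
  · rintro (⟨ha, rfl⟩ | ⟨hb, rfl⟩)
    · exact (hT.adj_parent ha).symm
    · exact hT.adj_parent hb

end SimpleGraph

open SimpleGraph

namespace Function

variable {α : Type*} {f : α → α}

lemma exists_iterate_mem_periodicPts [Finite α] (f : α → α) (x : α) :
    ∃ k, f^[k] x ∈ periodicPts f := by
  obtain ⟨i, j, hij, heq⟩ := Finite.exists_ne_map_eq_of_infinite fun k : ℕ => f^[k] x
  wlog hlt : i < j generalizing i j
  · exact this j i hij.symm heq.symm (by omega)
  refine ⟨i, mk_mem_periodicPts (n := j - i) (by omega) ?_⟩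
  rw [IsPeriodicPt, IsFixedPt, ← iterate_add_apply, Nat.sub_add_cancel hlt.le]
  exact heq.symm

lemma mem_periodicPts_of_mapsTo [Finite α] {s : Set α} (hs : Set.MapsTo f s s)
    (hinj : Set.InjOn f s) {x : α} (hx : x ∈ s) : x ∈ periodicPts f := by
  obtain ⟨n, hn, hper⟩ :=
    mem_periodicPts.mp (((hs.restrict_inj).mpr hinj).mem_periodicPts ⟨x, hx⟩)
  exact mk_mem_periodicPts hn (hper.map (g := Subtype.val) fun _ => rfl)

lemma card_toFinset_periodicPts_pos [Fintype α] [Nonempty α] (f : α → α) :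
    0 < #(periodicPts f).toFinset := by
  obtain ⟨k, hk⟩ := exists_iterate_mem_periodicPts f (Classical.arbitrary α)
  exact card_pos.mpr ⟨_, Set.mem_toFinset.mpr hk⟩

end Function

namespace IsParentMap

variable {α : Type*} [LinearOrder α] {P : α → α} {r : α} (hP : IsParentMap P r)

noncomputable def spine (b : α) : Finset α := (range (hP.depth b + 1)).image (P^[·] b)

lemma mem_spine {b x : α} : x ∈ hP.spine b ↔ ∃ i ≤ hP.depth b, P^[i] b = x := by
  simp [spine]

lemma card_spine (b : α) : #(hP.spine b) = hP.depth b + 1 := by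
  rw [spine, card_image_of_injOn, card_range]
  intro i hi j hj hij
  simp only [coe_range, Set.mem_Iio] at hi hj
  exact hP.iterate_injOn (by omega) (by omega) hij

noncomputable def joyalFun (b x : α) : α :=
  if hx : x ∈ hP.spine b then
    P^[((hP.spine b).orderIsoOfFin (hP.card_spine b)).symm ⟨x, hx⟩] b
  else P x

-- Stated for any `S = spine b`, so that it applies to an enumeration of `(periodicPts _).toFinset`
-- without transporting it along that equality.
lemma joyalFun_orderEmbOfFin {b : α} {S : Finset α} (hS : S = hP.spine b) {k : ℕ}
    (h : #S = k) (i : Fin k) : hP.joyalFun b (S.orderEmbOfFin h i) = P^[i] b := by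
  subst hS
  have hx := (hP.spine b).orderEmbOfFin_mem h i
  let j := Fin.cast (h.symm.trans (hP.card_spine b)) i
  have hj : (⟨_, hx⟩ : hP.spine b) = (hP.spine b).orderIsoOfFin (hP.card_spine b) j :=
    Subtype.ext (by simp [j, orderEmbOfFin_eq_orderEmbOfFin_iff])
  rw [joyalFun, dif_pos hx, hj, OrderIso.symm_apply_apply]
  rfl

lemma joyalFun_of_notMem {b x : α} (hx : x ∉ hP.spine b) : hP.joyalFun b x = P x :=
  dif_neg hx

lemma exists_orderEmbOfFin_eq {b x : α} (hx : x ∈ hP.spine b) :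
    ∃ i, (hP.spine b).orderEmbOfFin (hP.card_spine b) i = x := by
  rwa [← Set.mem_range, range_orderEmbOfFin]

lemma mapsTo_joyalFun (b : α) : Set.MapsTo (hP.joyalFun b) (hP.spine b) (hP.spine b) := by
  intro x hx
  obtain ⟨i, rfl⟩ := hP.exists_orderEmbOfFin_eq hx
  rw [mem_coe, hP.joyalFun_orderEmbOfFin rfl, mem_spine]
  exact ⟨i, Nat.lt_succ_iff.mp i.2, rfl⟩

lemma injOn_joyalFun (b : α) : Set.InjOn (hP.joyalFun b) (hP.spine b) := by
  intro x hx y hy hxy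
  obtain ⟨i, rfl⟩ := hP.exists_orderEmbOfFin_eq hx
  obtain ⟨j, rfl⟩ := hP.exists_orderEmbOfFin_eq hy
  rw [hP.joyalFun_orderEmbOfFin rfl, hP.joyalFun_orderEmbOfFin rfl] at hxy
  rw [Fin.ext (hP.iterate_injOn (Nat.lt_succ_iff.mp i.2) (Nat.lt_succ_iff.mp j.2) hxy)]

lemma periodicPts_joyalFun [Finite α] (b : α) : periodicPts (hP.joyalFun b) = hP.spine b := by
  refine Set.Subset.antisymm (fun x hx => ?_)
    fun x hx => mem_periodicPts_of_mapsTo (hP.mapsTo_joyalFun b) (hP.injOn_joyalFun b) hx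
  obtain ⟨n, hn, hper⟩ := mem_periodicPts.mp hx
  obtain ⟨i, hi⟩ : ∃ i, (hP.joyalFun b)^[i] x ∈ hP.spine b := by
    by_contra! h
    have hiter : ∀ i, (hP.joyalFun b)^[i] x = P^[i] x := fun i => by
      induction i with
      | zero => rfl
      | succ i ih => rw [iterate_succ_apply', iterate_succ_apply', ih,
          hP.joyalFun_of_notMem (ih ▸ h i)]
    refine h (hP.depth x) ?_
    rw [hiter, hP.iterate_depth, mem_spine]
    exact ⟨hP.depth b, le_rfl, hP.iterate_depth b⟩
  have hle : i ≤ n * (i + 1) := (Nat.le_succ i).trans (Nat.le_mul_of_pos_left _ hn)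
  rw [← (hper.mul_const (i + 1)).eq, ← Nat.sub_add_cancel hle, iterate_add_apply]
  exact (hP.mapsTo_joyalFun b).iterate _ hi

lemma toFinset_periodicPts_joyalFun [Fintype α] (b : α) :
    (periodicPts (hP.joyalFun b)).toFinset = hP.spine b := by
  simp [periodicPts_joyalFun]

end IsParentMap

namespace Function

variable {α : Type*} [Fintype α] [LinearOrder α] [Nonempty α] (f : α → α)

-- The index is clamped at the last periodic point, so that `joyalParent f` fixes `joyalRoot f`.
noncomputable def joyalSeq (i : ℕ) : α :=
  f ((periodicPts f).toFinset.orderEmbOfFin rfl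
    ⟨min i (#(periodicPts f).toFinset - 1), by have := card_toFinset_periodicPts_pos f; omega⟩)

lemma joyalSeq_mem (i : ℕ) : joyalSeq f i ∈ periodicPts f :=
  (bijOn_periodicPts f).mapsTo (Set.mem_toFinset.mp (orderEmbOfFin_mem _ _ _))

lemma joyalSeq_min (i : ℕ) :
    joyalSeq f (min i (#(periodicPts f).toFinset - 1)) = joyalSeq f i := by
  simp only [joyalSeq, min_assoc, min_self]

lemma joyalSeq_injOn {i j : ℕ} (hi : i < #(periodicPts f).toFinset)
    (hj : j < #(periodicPts f).toFinset) (hij : joyalSeq f i = joyalSeq f j) : i = j := by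
  have := (bijOn_periodicPts f).injOn (Set.mem_toFinset.mp (orderEmbOfFin_mem _ _ _))
    (Set.mem_toFinset.mp (orderEmbOfFin_mem _ _ _)) hij
  rw [orderEmbOfFin_eq_orderEmbOfFin_iff] at this
  simp only at this
  omega

lemma exists_joyalSeq_eq {x : α} (hx : x ∈ periodicPts f) :
    ∃ i < #(periodicPts f).toFinset, joyalSeq f i = x := by
  obtain ⟨y, hy, rfl⟩ := (bijOn_periodicPts f).surjOn hx
  obtain ⟨⟨i, hi⟩, rfl⟩ : y ∈ Set.range ((periodicPts f).toFinset.orderEmbOfFin rfl) := by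
    rwa [range_orderEmbOfFin, Set.coe_toFinset]
  refine ⟨i, hi, ?_⟩
  rw [joyalSeq]
  congr 3
  omega

noncomputable def joyalParent (x : α) : α :=
  if h : ∃ i, joyalSeq f i = x then joyalSeq f (Nat.find h + 1) else f x

lemma joyalParent_joyalSeq (i : ℕ) : joyalParent f (joyalSeq f i) = joyalSeq f (i + 1) := by
  have h : ∃ j, joyalSeq f j = joyalSeq f i := ⟨i, rfl⟩
  have hm := card_toFinset_periodicPts_pos f
  have hfind : Nat.find h = min i (#(periodicPts f).toFinset - 1) := by
    have hle : Nat.find h ≤ min i (#(periodicPts f).toFinset - 1) :=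
      Nat.find_le (joyalSeq_min f i)
    exact joyalSeq_injOn f (by omega) (by omega)
      ((Nat.find_spec h).trans (joyalSeq_min f i).symm)
  rw [joyalParent, dif_pos h, hfind, ← joyalSeq_min f (i + 1), ← joyalSeq_min f (_ + 1)]
  congr 1
  omega

lemma joyalParent_of_notMem {x : α} (hx : x ∉ periodicPts f) : joyalParent f x = f x :=
  dif_neg fun ⟨i, hi⟩ => hx (hi ▸ joyalSeq_mem f i)

lemma iterate_joyalParent_joyalSeq (i k : ℕ) :
    (joyalParent f)^[k] (joyalSeq f i) = joyalSeq f (i + k) := by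
  induction k with
  | zero => rfl
  | succ k ih => rw [iterate_succ_apply', ih, joyalParent_joyalSeq, add_assoc]

noncomputable def joyalRoot : α := joyalSeq f (#(periodicPts f).toFinset - 1)

lemma iterate_joyalParent_joyalSeq_eq_root (i : ℕ) :
    (joyalParent f)^[#(periodicPts f).toFinset - 1] (joyalSeq f i) = joyalRoot f := by
  rw [iterate_joyalParent_joyalSeq, joyalRoot, ← joyalSeq_min f (i + _),
    min_eq_right (by omega)]

lemma isParentMap_joyalParent : IsParentMap (joyalParent f) (joyalRoot f) := by
  refine ⟨?_, fun x => ?_⟩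
  · rw [joyalRoot, joyalParent_joyalSeq, ← joyalSeq_min f (_ + 1), min_eq_right (by omega)]
  suffices ∃ k, (joyalParent f)^[k] x ∈ periodicPts f by
    obtain ⟨k, hk⟩ := this
    obtain ⟨i, -, hi⟩ := exists_joyalSeq_eq f hk
    exact ⟨_ + k, by rw [iterate_add_apply, ← hi, iterate_joyalParent_joyalSeq_eq_root]⟩
  obtain ⟨n, hn⟩ := exists_iterate_mem_periodicPts f x
  induction n generalizing x with
  | zero => exact ⟨0, hn⟩
  | succ n ih =>
    by_cases hx : x ∈ periodicPts f
    · exact ⟨0, hx⟩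
    · obtain ⟨k, hk⟩ := ih (f x) (by rwa [← iterate_succ_apply])
      exact ⟨k + 1, by rwa [iterate_succ_apply, joyalParent_of_notMem f hx]⟩

lemma depth_joyalSeq_zero :
    (isParentMap_joyalParent f).depth (joyalSeq f 0) = #(periodicPts f).toFinset - 1 := by
  have hP := isParentMap_joyalParent f
  refine le_antisymm (hP.depth_le (iterate_joyalParent_joyalSeq_eq_root f 0)) ?_
  have h := hP.iterate_depth (joyalSeq f 0)
  have hle := hP.depth_le (iterate_joyalParent_joyalSeq_eq_root f 0)
  have hm := card_toFinset_periodicPts_pos f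
  rw [iterate_joyalParent_joyalSeq, zero_add] at h
  exact (joyalSeq_injOn f (by omega) (by omega) h).ge

lemma spine_joyalSeq_zero :
    (isParentMap_joyalParent f).spine (joyalSeq f 0) = (periodicPts f).toFinset := by
  ext x
  simp only [IsParentMap.mem_spine, depth_joyalSeq_zero, iterate_joyalParent_joyalSeq, zero_add,
    Set.mem_toFinset]
  constructor
  · rintro ⟨i, -, rfl⟩
    exact joyalSeq_mem f i
  · intro hx
    obtain ⟨i, hi, rfl⟩ := exists_joyalSeq_eq f hx
    exact ⟨i, by omega, rfl⟩

lemma joyalFun_joyalParent : (isParentMap_joyalParent f).joyalFun (joyalSeq f 0) = f := by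
  funext x
  by_cases hx : x ∈ periodicPts f
  · obtain ⟨⟨i, hi⟩, rfl⟩ : x ∈ Set.range ((periodicPts f).toFinset.orderEmbOfFin rfl) := by
      rwa [range_orderEmbOfFin, Set.coe_toFinset]
    rw [(isParentMap_joyalParent f).joyalFun_orderEmbOfFin (spine_joyalSeq_zero f).symm,
      iterate_joyalParent_joyalSeq, zero_add, joyalSeq]
    congr 3
    dsimp only
    omega
  · rw [IsParentMap.joyalFun_of_notMem _ (by rwa [spine_joyalSeq_zero, Set.mem_toFinset]),
      joyalParent_of_notMem f hx]

end Function

namespace IsParentMap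

variable {α : Type*} [Fintype α] [LinearOrder α] [Nonempty α] {P : α → α} {r : α}
  (hP : IsParentMap P r) (b : α)

lemma joyalSeq_joyalFun (i : ℕ) : joyalSeq (hP.joyalFun b) i = P^[min i (hP.depth b)] b := by
  rw [joyalSeq, hP.joyalFun_orderEmbOfFin (hP.toFinset_periodicPts_joyalFun b)]
  simp only [hP.toFinset_periodicPts_joyalFun b, card_spine, Nat.add_sub_cancel]

lemma joyalParent_joyalFun : joyalParent (hP.joyalFun b) = P := by
  funext x
  by_cases hx : x ∈ hP.spine b
  · obtain ⟨i, hi, rfl⟩ := hP.mem_spine.mp hx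
    have hseq : P^[i] b = joyalSeq (hP.joyalFun b) i := by
      rw [joyalSeq_joyalFun, min_eq_left hi]
    rw [hseq, joyalParent_joyalSeq, joyalSeq_joyalFun, ← hseq]
    rcases hi.lt_or_eq with hlt | rfl
    · rw [min_eq_left hlt, iterate_succ_apply']
    · rw [min_eq_right (by omega), hP.iterate_depth, hP.apply_root]
  · rw [joyalParent_of_notMem _ (by rwa [periodicPts_joyalFun]), hP.joyalFun_of_notMem hx]

lemma joyalRoot_joyalFun : joyalRoot (hP.joyalFun b) = r := by
  rw [joyalRoot, joyalSeq_joyalFun, hP.toFinset_periodicPts_joyalFun, card_spine,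
    Nat.add_sub_cancel, min_self, hP.iterate_depth]

lemma joyalSeq_zero_joyalFun : joyalSeq (hP.joyalFun b) 0 = b := by
  rw [joyalSeq_joyalFun, Nat.zero_min, iterate_zero_apply]

end IsParentMap

abbrev RootedCayleyTree (α : Type*) : Type _ := {q : α × (α → α) // IsParentMap q.2 q.1}

noncomputable def joyalEquiv (α : Type*) [Fintype α] [LinearOrder α] [Nonempty α] :
    RootedCayleyTree α × α ≃ (α → α) where
  toFun q := q.1.2.joyalFun q.2
  invFun f := (⟨(joyalRoot f, joyalParent f), isParentMap_joyalParent f⟩, joyalSeq f 0)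
  left_inv := by
    rintro ⟨⟨⟨r, P⟩, hP⟩, b⟩
    simp only [hP.joyalRoot_joyalFun, hP.joyalParent_joyalFun, hP.joyalSeq_zero_joyalFun]
  right_inv := joyalFun_joyalParent

theorem card_rootedCayleyTree (α : Type*) [Finite α] [Nonempty α] :
    Nat.card (RootedCayleyTree α) = Nat.card α ^ (Nat.card α - 1) := by
  have := Fintype.ofFinite α
  let := LinearOrder.lift' _ (Fintype.equivFin α).injective
  have h := Nat.card_congr (joyalEquiv α)
  rw [Nat.card_prod, Nat.card_fun, ← pow_sub_one_mul Nat.card_pos.ne'] at h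
  exact Nat.eq_of_mul_eq_mul_right Nat.card_pos h

lemma int_add_mem_Ioo_iff {d : ℤ} {t : ℝ} (ht₀ : t ≠ 0) (ht : |t| < 1) :
    (d : ℝ) + t ∈ Set.Ioo 0 1 ↔ d = if t < 0 then 1 else 0 := by
  rw [abs_lt] at ht
  constructor
  · rintro ⟨h0, h1⟩
    split_ifs with hneg
    · have h0' : (0 : ℝ) < d := by linarith
      have h1' : (d : ℝ) < 2 := by linarith
      have : 0 < d := by exact_mod_cast h0'
      have : d < 2 := by exact_mod_cast h1'
      omega
    · have h0' : (-1 : ℝ) < d := by linarith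
      have h1' : (d : ℝ) < 1 := by linarith
      have : -1 < d := by exact_mod_cast h0'
      have : d < 1 := by exact_mod_cast h1'
      omega
  · rintro rfl
    split_ifs with hneg
    · constructor <;> push_cast <;> linarith
    · have := lt_of_le_of_ne (not_lt.mp hneg) ht₀.symm
      constructor <;> push_cast <;> linarith

section Centroid

variable {n : ℕ} (h : Fin n → ℤ)

lemma extv_zero : extv h 0 = 0 := rfl

lemma extv_succ (i : Fin n) : extv h i.succ = h i := rfl

lemma cent_sub_cent (u v : Fin (n + 1)) :
    cent n h v - cent n h u = ((extv h v - extv h u : ℤ) : ℝ) + ((v : ℝ) - u) / (n + 1) := by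
  unfold cent
  push_cast
  ring

lemma abs_index_sub_div_lt_one (u v : Fin (n + 1)) : |((v : ℝ) - u) / (n + 1)| < 1 := by
  have hu : (u : ℝ) ≤ n := by exact_mod_cast Nat.lt_succ_iff.mp u.2
  have hv : (v : ℝ) ≤ n := by exact_mod_cast Nat.lt_succ_iff.mp v.2
  rw [abs_div, abs_of_pos (by positivity : (0 : ℝ) < n + 1), div_lt_one (by positivity), abs_lt]
  constructor <;> linarith [Nat.cast_nonneg (α := ℝ) u, Nat.cast_nonneg (α := ℝ) v]

lemma cent_injective : Function.Injective (cent n h) := by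
  intro u v huv
  have hsub := cent_sub_cent h u v
  rw [huv, sub_self, eq_comm, ← neg_eq_iff_add_eq_zero] at hsub
  have hd : extv h v - extv h u = 0 := by
    have := abs_index_sub_div_lt_one u v
    rw [← hsub, abs_neg] at this
    exact Int.abs_lt_one_iff.mp (by exact_mod_cast this)
  rw [hd, Int.cast_zero, neg_zero, eq_comm, div_eq_zero_iff, sub_eq_zero] at hsub
  exact Fin.ext (by exact_mod_cast (hsub.resolve_right (by positivity)).symm)

lemma cent_sub_mem_Ioo_iff {u v : Fin (n + 1)} (huv : u ≠ v) :
    cent n h v - cent n h u ∈ Set.Ioo 0 1 ↔ extv h v - extv h u = if v < u then 1 else 0 := by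
  have hpos : (0 : ℝ) < n + 1 := by positivity
  have hne : ((v : ℝ) - u) / (n + 1) ≠ 0 :=
    div_ne_zero (sub_ne_zero.mpr fun h => huv (Fin.ext (by exact_mod_cast h.symm))) hpos.ne'
  have hneg : ((v : ℝ) - u) / (n + 1) < 0 ↔ v < u := by
    rw [div_lt_iff₀ hpos, zero_mul, sub_neg, Nat.cast_lt, Fin.val_fin_lt]
  rw [cent_sub_cent, int_add_mem_Ioo_iff hne (abs_index_sub_div_lt_one u v)]
  simp only [hneg]

lemma idxMin_eq {r : Fin (n + 1)} (hr : ∀ v, v ≠ r → cent n h r < cent n h v) :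
    idxMin n h = r := by
  by_contra hne
  exact (hr _ hne).not_ge ((Finite.exists_min (cent n h)).choose_spec r)

end Centroid

namespace IsParentMap

variable {α : Type*} {P : α → α} {r : α} (hP : IsParentMap P r)

noncomputable def sumToRoot (s : α → ℤ) (a : α) : ℤ := ∑ i ∈ range (hP.depth a), s (P^[i] a)

lemma sumToRoot_of_ne (s : α → ℤ) {a : α} (ha : a ≠ r) :
    hP.sumToRoot s a = s a + hP.sumToRoot s (P a) := by
  simp only [sumToRoot, ← hP.depth_apply ha, sum_range_succ', iterate_succ_apply,
    iterate_zero_apply]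
  ring

include hP in
lemma sub_eq_sub_root {G : Type*} [AddCommGroup G] {g₁ g₂ : α → G}
    (h : ∀ a, a ≠ r → g₁ a - g₁ (P a) = g₂ a - g₂ (P a)) (a : α) :
    g₁ a - g₂ a = g₁ r - g₂ r := by
  induction a using hP.induction with
  | root => rfl
  | step a ha ih => rw [← ih, ← sub_eq_sub_iff_sub_eq_sub, h a ha]

end IsParentMap

namespace IsParentMap

variable {n : ℕ} {P : Fin (n + 1) → Fin (n + 1)} {r : Fin (n + 1)} (hP : IsParentMap P r)

noncomputable def heights : Fin n → ℤ := fun i =>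
  hP.sumToRoot (fun v => if v < P v then 1 else 0) i.succ -
    hP.sumToRoot (fun v => if v < P v then 1 else 0) 0

lemma extv_heights_sub {v : Fin (n + 1)} (hv : v ≠ r) :
    extv hP.heights v - extv hP.heights (P v) = if v < P v then 1 else 0 := by
  have hext : ∀ w, extv hP.heights w = hP.sumToRoot (fun v => if v < P v then 1 else 0) w -
      hP.sumToRoot (fun v => if v < P v then 1 else 0) 0 :=
    Fin.cases (by rw [extv_zero, sub_self]) fun _ => rfl
  rw [hext, hext, hP.sumToRoot_of_ne _ hv]
  ring

lemma cent_heights_sub_mem_Ioo {v : Fin (n + 1)} (hv : v ≠ r) :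
    cent n hP.heights v - cent n hP.heights (P v) ∈ Set.Ioo 0 1 :=
  (cent_sub_mem_Ioo_iff _ (hP.apply_ne hv)).mpr (hP.extv_heights_sub hv)

lemma cent_heights_apply_lt {v : Fin (n + 1)} (hv : v ≠ r) :
    cent n hP.heights (P v) < cent n hP.heights v :=
  sub_pos.mp (hP.cent_heights_sub_mem_Ioo hv).1

lemma idxMin_heights : idxMin n hP.heights = r :=
  idxMin_eq _ fun _ hv => hP.lt_of_apply_lt (fun _ ha => hP.cent_heights_apply_lt ha) hv

lemma isIncTree_heights : IsIncTree n hP.heights (parentGraph r P) := by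
  refine ⟨isTree_parentGraph hP, fun a b hab => ⟨hab.ne, ?_⟩, ?_⟩
  · rcases (parentGraph_adj hP).mp hab with ⟨ha, rfl⟩ | ⟨hb, rfl⟩
    · have := hP.cent_heights_sub_mem_Ioo ha
      exact abs_lt.mpr ⟨by linarith [this.1], this.2⟩
    · have := hP.cent_heights_sub_mem_Ioo hb
      rw [abs_sub_comm]
      exact abs_lt.mpr ⟨by linarith [this.1], this.2⟩
  · show (parentGraph r P).IsIncreasingFrom _ _
    rw [hP.idxMin_heights]
    exact isIncreasingFrom_parentGraph hP fun _ ha => hP.cent_heights_apply_lt ha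

end IsParentMap

namespace IsIncTree

variable {n : ℕ} {h : Fin n → ℤ} {T : SimpleGraph (Fin (n + 1))} (hT : IsIncTree n h T)

include hT in
lemma isIncreasingFrom : T.IsIncreasingFrom (cent n h) (idxMin n h) := hT.2.2

lemma isParentMap : IsParentMap (hT.1.parent (idxMin n h)) (idxMin n h) :=
  hT.1.isParentMap_parent hT.isIncreasingFrom

lemma extv_sub_parent {v : Fin (n + 1)} (hv : v ≠ idxMin n h) :
    extv h v - extv h (hT.1.parent (idxMin n h) v) =
      if v < hT.1.parent (idxMin n h) v then 1 else 0 := by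
  have hadj := hT.1.adj_parent hv
  have hlt := hT.1.parent_lt hT.isIncreasingFrom hv
  have habs := (hT.2.1 hadj).2
  rw [abs_sub_comm] at habs
  exact (cent_sub_mem_Ioo_iff h hadj.ne).mp ⟨sub_pos.mpr hlt, (abs_lt.mp habs).2⟩

end IsIncTree

lemma finsum_card_filter_eq_nat_card_sigma {ι β : Type*} [Fintype β] (p : ι → β → Prop)
    [DecidableRel p] [Finite (Σ i, {b // p i b})] :
    ∑ᶠ i, #{b | p i b} = Nat.card (Σ i, {b // p i b}) := by
  let S := Set.range (Sigma.fst : (Σ i, {b // p i b}) → ι)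
  have : Fintype S := (Set.finite_range _).fintype
  have hsupp : Function.support (fun i => #{b | p i b}) ⊆ S.toFinset := fun i hi => by
    obtain ⟨b, hb⟩ := card_ne_zero.mp hi
    exact Set.mem_toFinset.mpr ⟨⟨i, b, (mem_filter.mp hb).2⟩, rfl⟩
  rw [finsum_eq_sum_of_support_subset _ hsupp, ← Nat.card_congr
    (Equiv.sigmaSubtypeEquivOfSubset _ (· ∈ S) fun i b => ⟨⟨i, b⟩, rfl⟩), Nat.card_sigma,
    ← Finset.sum_set_coe]
  simp [Nat.card_eq_fintype_card, Fintype.card_subtype]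

abbrev IncTreePair (n : ℕ) : Type :=
  Σ h : Fin n → ℤ, {T : SimpleGraph (Fin (n + 1)) // IsIncTree n h T}

namespace IncTreePair

variable {n : ℕ}

noncomputable def toRootedCayleyTree (x : IncTreePair n) : RootedCayleyTree (Fin (n + 1)) :=
  ⟨(idxMin n x.1, x.2.2.1.parent (idxMin n x.1)), x.2.2.isParentMap⟩

lemma toRootedCayleyTree_injective : Function.Injective (toRootedCayleyTree (n := n)) := by
  rintro ⟨h₁, T₁, hT₁⟩ ⟨h₂, T₂, hT₂⟩ heq
  simp only [toRootedCayleyTree, Subtype.mk.injEq, Prod.mk.injEq] at heq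
  obtain ⟨hr, hP⟩ := heq
  have hsub := hT₁.isParentMap.sub_eq_sub_root (g₁ := extv h₁) (g₂ := extv h₂) fun a ha => by
    rw [hT₁.extv_sub_parent ha, hP, hT₂.extv_sub_parent (hr ▸ ha)]
  obtain rfl : h₁ = h₂ := funext fun i => by
    have := (hsub i.succ).trans (hsub 0).symm
    rwa [extv_succ, extv_succ, extv_zero, extv_zero, sub_zero, sub_eq_zero] at this
  obtain rfl : T₁ = T₂ := by
    rw [hT₁.1.eq_parentGraph hT₁.isIncreasingFrom (cent_injective _),
      hT₂.1.eq_parentGraph hT₂.isIncreasingFrom (cent_injective _), hP]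
  rfl

lemma toRootedCayleyTree_surjective : Function.Surjective (toRootedCayleyTree (n := n)) := by
  rintro ⟨⟨r, P⟩, hP⟩
  refine ⟨⟨hP.heights, parentGraph r P, hP.isIncTree_heights⟩,
    Subtype.ext (Prod.ext hP.idxMin_heights (funext fun v => ?_))⟩
  show (isTree_parentGraph hP).parent (idxMin n hP.heights) v = P v
  rw [hP.idxMin_heights]
  by_cases hv : v = r
  · rw [hv, IsTree.parent_self]
    exact hP.apply_root.symm
  · exact ((isTree_parentGraph hP).eq_parent_of_adj
      (isIncreasingFrom_parentGraph hP fun _ ha => hP.cent_heights_apply_lt ha)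
      ((parentGraph_adj hP).mpr (.inr ⟨hv, rfl⟩)) (hP.cent_heights_apply_lt hv)).symm

instance : Finite (IncTreePair n) := Finite.of_injective _ toRootedCayleyTree_injective

end IncTreePair

/-- The sum over all `h ∈ ℤ^n` of the number of `h`-increasing trees on `{0, …, n}` equals
`(n+1)^n`, the number of rooted Cayley trees on `{0, …, n}`. -/
theorem sum_card_incTrees (n : ℕ) :
    ∑ᶠ h : Fin n → ℤ,
      (Finset.univ.filter (fun T : SimpleGraph (Fin (n + 1)) => IsIncTree n h T)).card
    = (n + 1) ^ n := by
  rw [finsum_card_filter_eq_nat_card_sigma (fun h T => IsIncTree n h T),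
    Nat.card_congr (Equiv.ofBijective _ ⟨IncTreePair.toRootedCayleyTree_injective,
      IncTreePair.toRootedCayleyTree_surjective⟩),
    card_rootedCayleyTree, Nat.card_fin, Nat.add_sub_cancel]
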